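/- arXiv:1912.10091 — 5 statements merged into one kernel-verified Lean document; each statement's English description precedes it below -/
import Mathlib

section
/- For every d ≥ 1 and R > 0, the integral over the ball B(0,R) ⊂ ℝ^d of |x|²/(x₁² + |x|⁴) dx is finite, where x₁ denotes the first coordinate of x. -/
/-!
Write `r = |x|`. In dimension one `x₁² = r²`, so the integrand is `1 / (1 + r²) ≤ 1`.
Otherwise pick a second coordinate `x₂`. Weighted AM–GM gives `|x₁|^{2/3} r^{8/3} ≤ x₁² + r⁴`,
so the integrand is at most `|x₁|^{-2/3} r^{-2/3} ≤ |x₁|^{-2/3} |x₂|^{-2/3}`. On the ball this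
is dominated by a product of one-variable functions `|t|^{-2/3}` on `(-R, R)`, each integrable
since `2/3 < 1`, and such a product is integrable on `ℝ^d`.
-/

open MeasureTheory Set

lemma intervalIntegrable_abs_rpow {s : ℝ} (hs : -1 < s) (a b : ℝ) :
    IntervalIntegrable (fun t : ℝ => |t| ^ s) volume a b := by
  have hpos : ∀ c, 0 ≤ c → IntervalIntegrable (fun t : ℝ => |t| ^ s) volume 0 c := fun c hc =>
    (intervalIntegral.intervalIntegrable_rpow' hs).congr fun t ht => by
      rw [uIoc_of_le hc] at ht
      rw [abs_of_pos ht.1]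
  have hzero : ∀ c, IntervalIntegrable (fun t : ℝ => |t| ^ s) volume 0 c := by
    intro c
    rcases le_total 0 c with hc | hc
    · exact hpos c hc
    · simpa using (IntervalIntegrable.iff_comp_neg).1 (hpos (-c) (by linarith))
  exact (hzero a).symm.trans (hzero b)

lemma sq_div_sq_add_pow_four_le {a b r : ℝ} (ha : 0 < a) (hb : 0 < b) (hbr : b ≤ r) :
    r ^ 2 / (a ^ 2 + r ^ 4) ≤ a ^ (-(2 / 3 : ℝ)) * b ^ (-(2 / 3 : ℝ)) := by
  have hr : 0 < r := hb.trans_le hbr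
  have amgm : (a * r) ^ (2 / 3 : ℝ) * r ^ 2 ≤ a ^ 2 + r ^ 4 :=
    calc (a * r) ^ (2 / 3 : ℝ) * r ^ 2 = (a ^ 2) ^ (1 / 3 : ℝ) * (r ^ 4) ^ (2 / 3 : ℝ) := by
          rw [Real.mul_rpow ha.le hr.le, ← Real.rpow_natCast a 2, ← Real.rpow_natCast r 4,
            ← Real.rpow_natCast r 2, ← Real.rpow_mul ha.le, ← Real.rpow_mul hr.le, mul_assoc,
            ← Real.rpow_add hr]
          norm_num
      _ ≤ 1 / 3 * a ^ 2 + 2 / 3 * r ^ 4 :=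
          Real.geom_mean_le_arith_mean2_weighted (by norm_num) (by norm_num)
            (by positivity) (by positivity) (by norm_num)
      _ ≤ a ^ 2 + r ^ 4 := by nlinarith [sq_nonneg a, pow_pos hr 4]
  calc r ^ 2 / (a ^ 2 + r ^ 4) ≤ r ^ 2 / ((a * r) ^ (2 / 3 : ℝ) * r ^ 2) := by gcongr
    _ = (a * r) ^ (-(2 / 3 : ℝ)) := by
        rw [Real.rpow_neg (by positivity)]; field_simp
    _ ≤ (a * b) ^ (-(2 / 3 : ℝ)) :=
        Real.rpow_le_rpow_of_nonpos (by positivity) (by gcongr) (by norm_num)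
    _ = a ^ (-(2 / 3 : ℝ)) * b ^ (-(2 / 3 : ℝ)) := Real.mul_rpow ha.le hb.le

namespace EuclideanSpace

variable {ι : Type*} [Fintype ι]

lemma ae_apply_ne (i : ι) (a : ℝ) : ∀ᵐ x : EuclideanSpace ℝ ι, x i ≠ a :=
  (PiLp.volume_preserving_ofLp ι).quasiMeasurePreserving.ae <|
    volume_pi (α := fun _ : ι => ℝ) ▸ Measure.ae_eval_ne _ i a

lemma integrableOn_ball_prod_abs_rpow {s : ι → ℝ} (hs : ∀ i, -1 < s i) (R : ℝ) :
    IntegrableOn (fun x : EuclideanSpace ℝ ι => ∏ i, |x i| ^ s i) (Metric.ball 0 R) := by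
  set F : ι → ℝ → ℝ := fun i => (Ioo (-R) R).indicator fun t => |t| ^ s i
  have hF : ∀ i, Integrable (F i) := fun i =>
    (integrable_indicator_iff measurableSet_Ioo).2 <|
      (intervalIntegrable_abs_rpow (hs i) (-R) R).def'.mono_set fun t ht =>
        ⟨ht.1.trans_le' (min_le_left _ _), ht.2.le.trans (le_max_right _ _)⟩
  have hprod : Integrable (fun x : EuclideanSpace ℝ ι => ∏ i, F i (x i)) :=
    ((PiLp.volume_preserving_ofLp ι).integrable_comp_emb
      (MeasurableEquiv.toLp 2 (ι → ℝ)).symm.measurableEmbedding).2 (Integrable.fintype_prod hF)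
  refine hprod.integrableOn.congr_fun (fun (x : EuclideanSpace ℝ ι) hx =>
    Finset.prod_congr rfl fun i _ => ?_) measurableSet_ball
  have hxi : |x i| < R := (PiLp.norm_apply_le x i).trans_lt (mem_ball_zero_iff.1 hx)
  exact indicator_of_mem (mem_Ioo.2 (abs_lt.1 hxi)) _

lemma integrableOn_ball_of_subsingleton [Subsingleton ι] (i : ι) (R : ℝ) :
    IntegrableOn (fun x : EuclideanSpace ℝ ι => ‖x‖ ^ 2 / (x i ^ 2 + ‖x‖ ^ 4))
      (Metric.ball 0 R) := by
  refine (integrableOn_const measure_ball_lt_top.ne (C := (1 : ℝ))).mono'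
    (Measurable.aestronglyMeasurable (by fun_prop)) (ae_of_all _ fun x => ?_)
  have hx : x i ^ 2 = ‖x‖ ^ 2 := by
    rw [real_norm_sq_eq, Fintype.sum_subsingleton _ i]
  rw [Real.norm_of_nonneg (by positivity), hx]
  exact div_le_one_of_le₀ (by nlinarith [pow_nonneg (norm_nonneg x) 4]) (by positivity)

lemma integrableOn_ball_of_ne {i j : ι} (hij : i ≠ j) (R : ℝ) :
    IntegrableOn (fun x : EuclideanSpace ℝ ι => ‖x‖ ^ 2 / (x i ^ 2 + ‖x‖ ^ 4))
      (Metric.ball 0 R) := by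
  classical
  set s : ι → ℝ := fun k => if k = i ∨ k = j then -(2 / 3) else 0
  have hs : ∀ k, -1 < s k := fun k => by simp only [s]; split_ifs <;> norm_num
  refine (integrableOn_ball_prod_abs_rpow hs R).mono'
    (Measurable.aestronglyMeasurable (by fun_prop)) ?_
  filter_upwards [ae_restrict_of_ae (ae_apply_ne i 0), ae_restrict_of_ae (ae_apply_ne j 0)]
    with x hxi hxj
  rw [Real.norm_of_nonneg (by positivity), Fintype.prod_eq_mul i j hij
    fun k hk => by simp [s, hk.1, hk.2], ← sq_abs (x i)]
  simpa [s, hij.symm] using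
    sq_div_sq_add_pow_four_le (abs_pos.2 hxi) (abs_pos.2 hxj) (PiLp.norm_apply_le x j)

end EuclideanSpace

theorem stmt_1_general (d : ℕ) (hd : 0 < d) (R : ℝ) :
    IntegrableOn
      (fun x : EuclideanSpace ℝ (Fin d) => ‖x‖ ^ 2 / ((x ⟨0, hd⟩) ^ 2 + ‖x‖ ^ 4))
      (Metric.ball 0 R) := by
  rcases subsingleton_or_nontrivial (Fin d) with _ | _
  · exact EuclideanSpace.integrableOn_ball_of_subsingleton _ R
  · obtain ⟨j, hj⟩ := exists_ne (⟨0, hd⟩ : Fin d)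
    exact EuclideanSpace.integrableOn_ball_of_ne hj.symm R

/-- For every `d ≥ 1` and `R > 0`, the function
`x ↦ |x|² / (x₁² + |x|⁴)` is integrable on the open Euclidean ball `B(0,R) ⊆ ℝ^d`
(i.e. its integral over the ball is finite). -/
theorem stmt_1 (d : ℕ) (hd : 0 < d) (R : ℝ) (hR : 0 < R) :
    IntegrableOn
      (fun x : EuclideanSpace ℝ (Fin d) => ‖x‖ ^ 2 / ((x ⟨0, hd⟩) ^ 2 + ‖x‖ ^ 4))
      (Metric.ball 0 R) :=
  stmt_1_general d hd R
end

section
/- With s(r,κ) as defined by s(r,κ) = √((r² + √(r⁴ + r²κ²))/2) − i·rκ/(√2·√(r² + √(r⁴ + r²κ²))) for r > 0 and s(0,κ)=0, one has for all (r,κ) ∈ (0,∞) × ℝ: 0 ≤ Re(s(r,κ)) − r ≤ κ²/(8r), and 0 ≤ −sgn(κ)·Im(s(r,κ)) ≤ |κ|/2. -/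
/-!
With `B = √(r⁴ + r²κ²)` one has `r² ≤ B ≤ r² + κ²/2`, the upper bound because
`(r² + κ²/2)² = B² + κ⁴/4`. Hence `r² ≤ (r² + B)/2 ≤ r² + κ²/4 ≤ (r + κ²/(8r))²`, which bounds
`Re s = √((r² + B)/2)`, and `√2 · √(r² + B) ≥ 2r`, which bounds `-sgn(κ) · Im s = r|κ| / (√2 · √(r² + B))`.
-/

open Real

lemma Real.sign_mul_self (x : ℝ) : Real.sign x * x = |x| := by
  rcases lt_trichotomy x 0 with hx | rfl | hx
  · rw [Real.sign_of_neg hx, abs_of_neg hx]; ring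
  · simp
  · rw [Real.sign_of_pos hx, abs_of_pos hx]; ring

section Bounds

variable {r κ B : ℝ}

lemma sq_le_sqrt_pow_four_add (r κ : ℝ) : r ^ 2 ≤ √(r ^ 4 + r ^ 2 * κ ^ 2) :=
  Real.le_sqrt_of_sq_le (by nlinarith [sq_nonneg (r * κ)])

lemma sqrt_pow_four_add_le (r κ : ℝ) : √(r ^ 4 + r ^ 2 * κ ^ 2) ≤ r ^ 2 + κ ^ 2 / 2 :=
  Real.sqrt_le_iff.mpr ⟨by positivity, by nlinarith [sq_nonneg (κ ^ 2)]⟩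

lemma le_sqrt_half_sq_add (hB : r ^ 2 ≤ B) : r ≤ √((r ^ 2 + B) / 2) :=
  Real.le_sqrt_of_sq_le (by linarith)

lemma sqrt_half_sq_add_le (hr : 0 < r) (hB : B ≤ r ^ 2 + κ ^ 2 / 2) :
    √((r ^ 2 + B) / 2) ≤ r + κ ^ 2 / (8 * r) := by
  refine Real.sqrt_le_iff.mpr ⟨by positivity, ?_⟩
  have hexpand : (r + κ ^ 2 / (8 * r)) ^ 2 = r ^ 2 + κ ^ 2 / 4 + (κ ^ 2 / (8 * r)) ^ 2 := by
    field_simp; ring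
  nlinarith [sq_nonneg (κ ^ 2 / (8 * r))]

lemma two_mul_le_sqrt_two_mul_sqrt_sq_add (hB : r ^ 2 ≤ B) :
    2 * r ≤ √2 * √(r ^ 2 + B) := by
  rw [← Real.sqrt_mul zero_le_two]
  exact Real.le_sqrt_of_sq_le (by nlinarith)

lemma mul_abs_div_le_abs_div_two (hr : 0 < r) (hB : r ^ 2 ≤ B) :
    r * |κ| / (√2 * √(r ^ 2 + B)) ≤ |κ| / 2 := calc
  r * |κ| / (√2 * √(r ^ 2 + B)) ≤ r * |κ| / (2 * r) :=
    div_le_div_of_nonneg_left (by positivity) (by positivity)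
      (two_mul_le_sqrt_two_mul_sqrt_sq_add hB)
  _ = |κ| / 2 := by field_simp

end Bounds

theorem stmt_3_general (S : ℝ → ℝ → ℂ)
    (hS : ∀ r κ : ℝ, 0 < r →
      S r κ = (Real.sqrt ((r ^ 2 + Real.sqrt (r ^ 4 + r ^ 2 * κ ^ 2)) / 2) : ℝ)
        - Complex.I *
          ((r * κ / (Real.sqrt 2 * Real.sqrt (r ^ 2 + Real.sqrt (r ^ 4 + r ^ 2 * κ ^ 2)))) : ℝ)) :
    ∀ r κ : ℝ, 0 < r →
      (0 ≤ (S r κ).re - r ∧ (S r κ).re - r ≤ κ ^ 2 / (8 * r)) ∧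
      (0 ≤ -Real.sign κ * (S r κ).im ∧ -Real.sign κ * (S r κ).im ≤ |κ| / 2) := by
  intro r κ hr
  set B := √(r ^ 4 + r ^ 2 * κ ^ 2)
  have hB₁ : r ^ 2 ≤ B := sq_le_sqrt_pow_four_add r κ
  have hB₂ : B ≤ r ^ 2 + κ ^ 2 / 2 := sqrt_pow_four_add_le r κ
  have hre : (S r κ).re = √((r ^ 2 + B) / 2) := by
    simp only [hS r κ hr, Complex.sub_re, Complex.ofReal_re, Complex.mul_re, Complex.I_re,
      Complex.I_im, Complex.ofReal_im]
    ring
  have him : -Real.sign κ * (S r κ).im = r * |κ| / (√2 * √(r ^ 2 + B)) := by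
    simp only [hS r κ hr, Complex.sub_im, Complex.ofReal_im, Complex.mul_im, Complex.I_re,
      Complex.I_im, Complex.ofReal_re]
    rw [← Real.sign_mul_self]
    ring
  refine ⟨⟨?_, ?_⟩, ⟨?_, ?_⟩⟩
  · linarith [le_sqrt_half_sq_add hB₁]
  · linarith [sqrt_half_sq_add_le hr hB₂]
  · rw [him]; positivity
  · rw [him]; exact mul_abs_div_le_abs_div_two hr hB₁

/-- With `s(r,κ)` as in Statement 2, for all `(r,κ) ∈ (0,∞) × ℝ` one has
`0 ≤ Re(s(r,κ)) − r ≤ κ²/(8r)` and `0 ≤ −sgn(κ)·Im(s(r,κ)) ≤ |κ|/2`. -/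
theorem stmt_3 (S : ℝ → ℝ → ℂ)
    (hS : ∀ r κ : ℝ, 0 < r →
      S r κ = (Real.sqrt ((r ^ 2 + Real.sqrt (r ^ 4 + r ^ 2 * κ ^ 2)) / 2) : ℝ)
        - Complex.I *
          ((r * κ / (Real.sqrt 2 * Real.sqrt (r ^ 2 + Real.sqrt (r ^ 4 + r ^ 2 * κ ^ 2)))) : ℝ))
    (hS0 : ∀ κ : ℝ, S 0 κ = 0) :
    ∀ r κ : ℝ, 0 < r →
      (0 ≤ (S r κ).re - r ∧ (S r κ).re - r ≤ κ ^ 2 / (8 * r)) ∧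
      (0 ≤ -Real.sign κ * (S r κ).im ∧ -Real.sign κ * (S r κ).im ≤ |κ| / 2) :=
  stmt_3_general S hS
end

section
/- Define for s ≥ 0 the weight ω_s(ξ) = (ξ₁² + |ξ|⁴)/|ξ|² for |ξ| < 1 and ω_s(ξ) = (1+|ξ|²)^s for |ξ| ≥ 1, and the space X^s(ℝ^d) of real tempered distributions f with f̂ ∈ L¹_loc and ‖f‖²_{X^s} = ∫ ω_s(ξ)|f̂(ξ)|² dξ < ∞. Then for d = 1, X^s(ℝ) = H^s(ℝ) with equivalent norms; and for d ≥ 2, H^s(ℝ^d) ⊂ X^s(ℝ^d) with ‖f‖_{X^s} ≤ 2‖f‖_{H^s} for all f ∈ H^s(ℝ^d), and this inclusion is strict. -/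
open MeasureTheory
open scoped ENNReal NNReal ComplexConjugate

/-- The anisotropic weight `ω_s` on `ℝ` (`ξ₁ = ξ` when `d = 1`). -/
noncomputable def omega1 (s : ℝ) (ξ : ℝ) : ℝ :=
  if |ξ| < 1 then (ξ ^ 2 + ξ ^ 4) / ξ ^ 2 else (1 + ξ ^ 2) ^ s

/-- The anisotropic weight `ω_s(ξ) = (ξ₁² + |ξ|⁴)/|ξ|²` for `|ξ| < 1` and
`(1+|ξ|²)^s` for `|ξ| ≥ 1`, defining the specialized space `X^s(ℝ^d)`. -/
noncomputable def omegaD (d : ℕ) (hd : 0 < d) (s : ℝ) (ξ : EuclideanSpace ℝ (Fin d)) : ℝ :=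
  if ‖ξ‖ < 1 then ((ξ ⟨0, hd⟩) ^ 2 + ‖ξ‖ ^ 4) / ‖ξ‖ ^ 2 else (1 + ‖ξ‖ ^ 2) ^ s

/-!
The norm comparisons are pointwise comparisons of the weights: for `0 < |ξ| < 1` one has
`ω_s(ξ) ≤ 1 + |ξ|² ≤ 2` (with equality `ω_s(ξ) = 1 + ξ²` when `d = 1`) and
`1 ≤ (1 + |ξ|²)^s ≤ 2^s`, while for `|ξ| ≥ 1` the two weights coincide.

For strictness, consider the thin dyadic slabs
`B_k = {|ξ₁| < 4^{-k}, 2^{-k-1} < |ξ| < 2^{-k}}`, which are nonempty only because `d ≥ 2`.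
On `B_k` the weight `ω_s` is at most `5 · 4^{-k}`, whereas the `H^s` weight is at least `1`.
Hence `f̂ = ∑_k |B_k|^{-1/2} 𝟙_{B_k}` has infinite `H^s` norm (every slab contributes `1`) but
finite `X^s` norm (the slab `B_k` contributes the mean of `ω_s` over it), and it is integrable
since `|B_k| ≲ 4^{-k}`.
-/

open Set Metric Function

theorem ofReal_mul_lintegral_le_of_ae_le {α : Type*} [MeasurableSpace α] {μ : Measure α}
    {v w : α → ℝ} {a b : ℝ} (ha : 0 ≤ a) (hb : 0 ≤ b) (h : ∀ᵐ x ∂μ, a * v x ≤ b * w x)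
    (g : α → ℝ≥0∞) :
    ENNReal.ofReal a * ∫⁻ x, ENNReal.ofReal (v x) * g x ∂μ ≤
      ENNReal.ofReal b * ∫⁻ x, ENNReal.ofReal (w x) * g x ∂μ := by
  rw [← lintegral_const_mul' _ _ ENNReal.ofReal_ne_top,
    ← lintegral_const_mul' _ _ ENNReal.ofReal_ne_top]
  refine lintegral_mono_ae (h.mono fun x hx => ?_)
  rw [← mul_assoc, ← mul_assoc, ← ENNReal.ofReal_mul ha, ← ENNReal.ofReal_mul hb]
  exact mul_le_mul_left (ENNReal.ofReal_le_ofReal hx) _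

theorem tsum_lt_top_of_le_ofReal_geometric {f : ℕ → ℝ≥0∞} {C r : ℝ} (hC : 0 ≤ C)
    (hr₀ : 0 ≤ r) (hr₁ : r < 1) (hf : ∀ k, f k ≤ ENNReal.ofReal (C * r ^ k)) :
    ∑' k, f k < ∞ :=
  calc ∑' k, f k ≤ ∑' k, ENNReal.ofReal (C * r ^ k) := ENNReal.tsum_le_tsum hf
    _ = ENNReal.ofReal (∑' k, C * r ^ k) :=
      (ENNReal.ofReal_tsum_of_nonneg (fun k => by positivity)
        ((summable_geometric_of_lt_one hr₀ hr₁).mul_left C)).symm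
    _ < ∞ := ENNReal.ofReal_lt_top

/- `omega1 s 0 = 0 / 0 = 0`, so the lower bound fails at the origin. -/
theorem omega1_bounds {s ξ : ℝ} (hs : 0 ≤ s) (hξ : ξ ≠ 0) :
    (2 * 2 ^ s)⁻¹ * (1 + ξ ^ 2) ^ s ≤ omega1 s ξ ∧ omega1 s ξ ≤ 2 * 2 ^ s * (1 + ξ ^ 2) ^ s := by
  have h2s : 1 ≤ (2 : ℝ) ^ s := Real.one_le_rpow one_le_two hs
  have hH : 1 ≤ (1 + ξ ^ 2) ^ s := Real.one_le_rpow (by nlinarith) hs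
  rw [inv_mul_le_iff₀ (by positivity), omega1]
  split_ifs with h
  · have hsq : ξ ^ 2 < 1 := (sq_lt_one_iff_abs_lt_one ξ).mpr h
    have hH2 : (1 + ξ ^ 2) ^ s ≤ 2 ^ s := Real.rpow_le_rpow (by positivity) (by linarith) hs
    have heq : (ξ ^ 2 + ξ ^ 4) / ξ ^ 2 = 1 + ξ ^ 2 := by field_simp
    rw [heq]
    constructor <;> nlinarith
  · constructor <;> nlinarith

theorem omegaD_le_four_mul {d : ℕ} {s : ℝ} (hs : 0 ≤ s) (h0 : 0 < d)
    (ξ : EuclideanSpace ℝ (Fin d)) : omegaD d h0 s ξ ≤ 4 * (1 + ‖ξ‖ ^ 2) ^ s := by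
  have hH : 1 ≤ (1 + ‖ξ‖ ^ 2) ^ s := Real.one_le_rpow (by nlinarith) hs
  rw [omegaD]
  split_ifs with h
  · rcases eq_or_ne ‖ξ‖ 0 with hξ | hξ
    · simp only [hξ]; norm_num
    have hcoord : (ξ ⟨0, h0⟩) ^ 2 ≤ ‖ξ‖ ^ 2 := by
      simpa only [Real.norm_eq_abs, sq_abs] using
        pow_le_pow_left₀ (norm_nonneg _) (PiLp.norm_apply_le ξ ⟨0, h0⟩) 2
    have hn : ‖ξ‖ ^ 2 ≤ 1 := by nlinarith [norm_nonneg ξ]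
    rw [div_le_iff₀ (by positivity)]
    nlinarith [mul_le_mul_of_nonneg_right hH (sq_nonneg ‖ξ‖),
      mul_le_mul_of_nonneg_right hn (sq_nonneg ‖ξ‖)]
  · nlinarith [Real.rpow_nonneg (show (0 : ℝ) ≤ 1 + ‖ξ‖ ^ 2 by positivity) s]

theorem lintegral_omegaD_rpow_le {d : ℕ} {s : ℝ} (hs : 0 ≤ s) (h0 : 0 < d)
    (F : EuclideanSpace ℝ (Fin d) → ℂ) :
    (∫⁻ ξ, ENNReal.ofReal (omegaD d h0 s ξ) * (‖F ξ‖₊ : ℝ≥0∞) ^ 2) ^ (1 / 2 : ℝ)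
      ≤ 2 * (∫⁻ ξ, ENNReal.ofReal ((1 + ‖ξ‖ ^ 2) ^ s) * (‖F ξ‖₊ : ℝ≥0∞) ^ 2) ^ (1 / 2 : ℝ) := by
  have h := ofReal_mul_lintegral_le_of_ae_le zero_le_one zero_le_four
    (ae_of_all volume fun ξ => by simpa using omegaD_le_four_mul hs h0 ξ)
    fun ξ => (‖F ξ‖₊ : ℝ≥0∞) ^ 2
  rw [ENNReal.ofReal_one, one_mul, ENNReal.ofReal_ofNat] at h
  calc _ ≤ (4 * ∫⁻ ξ, ENNReal.ofReal ((1 + ‖ξ‖ ^ 2) ^ s) * (‖F ξ‖₊ : ℝ≥0∞) ^ 2) ^ (1 / 2 : ℝ) :=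
        ENNReal.rpow_le_rpow h (by norm_num)
    _ = _ := by
      rw [ENNReal.mul_rpow_of_nonneg _ _ (by norm_num), show (4 : ℝ≥0∞) = 2 ^ (2 : ℝ) by norm_num,
        ← ENNReal.rpow_mul]
      norm_num

section NormalizedIndicatorSum

variable {α : Type*} {B : ℕ → Set α}

theorem tsum_indicator_apply_of_mem {M : Type*} [AddCommMonoid M] [TopologicalSpace M]
    (hB : Pairwise (Disjoint on B)) (c : ℕ → M) {k : ℕ} {x : α} (hx : x ∈ B k) :
    ∑' j, (B j).indicator (fun _ => c j) x = c k := by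
  rw [tsum_eq_single k fun j hj => indicator_of_notMem ((hB hj).notMem_of_mem_right hx) _,
    indicator_of_mem hx]

variable [MeasurableSpace α] {μ : Measure α}

theorem lintegral_mul_tsum_indicator {M : Type*} [AddCommMonoid M] [TopologicalSpace M]
    (hm : ∀ k, MeasurableSet (B k)) (hB : Pairwise (Disjoint on B)) (c : ℕ → M)
    (Φ : M → ℝ≥0∞) (hΦ : Φ 0 = 0) (w : α → ℝ≥0∞) :
    ∫⁻ x, w x * Φ (∑' j, (B j).indicator (fun _ => c j) x) ∂μ =
      ∑' k, ∫⁻ x in B k, w x * Φ (c k) ∂μ := by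
  have hsupp : support (fun x => w x * Φ (∑' j, (B j).indicator (fun _ => c j) x)) ⊆
      ⋃ k, B k := by
    intro x hx
    by_contra hx'
    simp only [mem_iUnion, not_exists] at hx'
    simp [indicator_of_notMem (hx' _), hΦ] at hx
  rw [← setLIntegral_eq_of_support_subset hsupp, lintegral_iUnion hm hB]
  exact tsum_congr fun k => setLIntegral_congr_fun (hm k) fun x hx => by
    rw [tsum_indicator_apply_of_mem hB c hx]

noncomputable def normalizedIndicatorSum (μ : Measure α) (B : ℕ → Set α) (x : α) : ℝ :=
  ∑' k, (B k).indicator (fun _ => (√(μ (B k)).toReal)⁻¹) x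

theorem measurable_normalizedIndicatorSum (hm : ∀ k, MeasurableSet (B k)) :
    Measurable (normalizedIndicatorSum μ B) :=
  Measurable.tsum fun k => measurable_const.indicator (hm k)

theorem normalizedIndicatorSum_neg [Neg α] (hneg : ∀ k x, -x ∈ B k ↔ x ∈ B k) (x : α) :
    normalizedIndicatorSum μ B (-x) = normalizedIndicatorSum μ B x := by
  refine tsum_congr fun k => ?_
  by_cases hx : x ∈ B k
  · rw [indicator_of_mem hx, indicator_of_mem ((hneg k x).mpr hx)]
  · rw [indicator_of_notMem hx, indicator_of_notMem (mt (hneg k x).mp hx)]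

theorem lintegral_mul_normalizedIndicatorSum_sq (hm : ∀ k, MeasurableSet (B k))
    (hB : Pairwise (Disjoint on B)) (hμ₀ : ∀ k, μ (B k) ≠ 0) (hμ : ∀ k, μ (B k) ≠ ∞)
    (w : α → ℝ≥0∞) :
    ∫⁻ x, w x * (‖normalizedIndicatorSum μ B x‖₊ : ℝ≥0∞) ^ 2 ∂μ = ∑' k, ⨍⁻ x in B k, w x ∂μ := by
  simp only [normalizedIndicatorSum]
  rw [lintegral_mul_tsum_indicator hm hB _ (fun r : ℝ => (‖r‖₊ : ℝ≥0∞) ^ 2) (by simp)]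
  refine tsum_congr fun k => ?_
  have hsq : (‖(√(μ (B k)).toReal)⁻¹‖₊ : ℝ≥0∞) ^ 2 = (μ (B k))⁻¹ := by
    rw [← enorm_eq_nnnorm, Real.enorm_eq_ofReal (by positivity),
      ← ENNReal.ofReal_pow (by positivity), inv_pow, Real.sq_sqrt ENNReal.toReal_nonneg,
      ENNReal.ofReal_inv_of_pos (ENNReal.toReal_pos (hμ₀ k) (hμ k)),
      ENNReal.ofReal_toReal (hμ k)]
  rw [hsq, lintegral_mul_const' _ _ (ENNReal.inv_ne_top.mpr (hμ₀ k)), setLAverage_eq,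
    div_eq_mul_inv]

theorem lintegral_enorm_normalizedIndicatorSum (hm : ∀ k, MeasurableSet (B k))
    (hB : Pairwise (Disjoint on B)) (hμ : ∀ k, μ (B k) ≠ ∞) :
    ∫⁻ x, ‖normalizedIndicatorSum μ B x‖ₑ ∂μ = ∑' k, ENNReal.ofReal √(μ (B k)).toReal := by
  have h := lintegral_mul_tsum_indicator (μ := μ) hm hB (fun k => (√(μ (B k)).toReal)⁻¹)
    (fun r : ℝ => ‖r‖ₑ) enorm_zero 1
  simp only [Pi.one_apply, one_mul, setLIntegral_const] at h
  simp only [normalizedIndicatorSum, h]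
  refine tsum_congr fun k => ?_
  rw [Real.enorm_eq_ofReal (by positivity), ← ENNReal.ofReal_toReal (hμ k),
    ← ENNReal.ofReal_mul (by positivity), ENNReal.toReal_ofReal ENNReal.toReal_nonneg,
    inv_mul_eq_div, Real.div_sqrt]

end NormalizedIndicatorSum

section DyadicSlab

variable {d : ℕ} {h0 : 0 < d}

def dyadicSlab (d : ℕ) (h0 : 0 < d) (k : ℕ) : Set (EuclideanSpace ℝ (Fin d)) :=
  {ξ | |ξ ⟨0, h0⟩| < ((1 / 2 : ℝ) ^ k) ^ 2 ∧ ‖ξ‖ ∈ Ioo ((1 / 2 : ℝ) ^ (k + 1)) ((1 / 2) ^ k)}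

theorem isOpen_dyadicSlab (k : ℕ) : IsOpen (dyadicSlab d h0 k) :=
  (isOpen_lt (by fun_prop) continuous_const).and (isOpen_Ioo.preimage continuous_norm)

theorem dyadicSlab_subset_ball (k : ℕ) : dyadicSlab d h0 k ⊆ ball 0 ((1 / 2) ^ k) :=
  fun _ hξ => mem_ball_zero_iff.mpr hξ.2.2

theorem neg_mem_dyadicSlab {k : ℕ} {ξ : EuclideanSpace ℝ (Fin d)} :
    -ξ ∈ dyadicSlab d h0 k ↔ ξ ∈ dyadicSlab d h0 k := by
  simp [dyadicSlab]

theorem pairwise_disjoint_dyadicSlab : Pairwise (Disjoint on dyadicSlab d h0) :=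
  (Antitone.pairwise_disjoint_on_Ioo_succ (f := fun k : ℕ => (1 / 2 : ℝ) ^ k)
    fun _ _ h => pow_le_pow_of_le_one (by norm_num) (by norm_num) h).mono
    fun _ _ h => (h.preimage norm).mono (fun _ hξ => hξ.2) (fun _ hξ => hξ.2)

theorem dyadicSlab_nonempty (hd : 2 ≤ d) (k : ℕ) : (dyadicSlab d h0 k).Nonempty := by
  refine ⟨EuclideanSpace.single ⟨1, hd⟩ (3 / 4 * (1 / 2) ^ k), ?_, ?_⟩
  · simp
  · simp only [PiLp.norm_single, Real.norm_eq_abs, pow_succ]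
    refine ⟨?_, ?_⟩ <;> rw [abs_of_pos (by positivity)] <;>
      nlinarith [pow_pos (one_half_pos (α := ℝ)) k]

theorem volume_dyadicSlab_pos (hd : 2 ≤ d) (k : ℕ) : volume (dyadicSlab d h0 k) ≠ 0 :=
  ((isOpen_dyadicSlab k).measure_pos volume (dyadicSlab_nonempty hd k)).ne'

theorem volume_dyadicSlab_ne_top (k : ℕ) : volume (dyadicSlab d h0 k) ≠ ∞ :=
  ((measure_mono (dyadicSlab_subset_ball k)).trans_lt measure_ball_lt_top).ne

theorem volume_dyadicSlab_le (hd : 2 ≤ d) (k : ℕ) :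
    volume (dyadicSlab d h0 k) ≤
      ENNReal.ofReal (((1 / 2) ^ k) ^ 2) * volume (ball (0 : EuclideanSpace ℝ (Fin d)) 1) := by
  have : Nonempty (Fin d) := ⟨⟨0, h0⟩⟩
  refine (measure_mono (dyadicSlab_subset_ball k)).trans ?_
  rw [EuclideanSpace.volume_ball, EuclideanSpace.volume_ball, ENNReal.ofReal_one, one_pow,
    one_mul, Fintype.card_fin, ← ENNReal.ofReal_pow (by positivity)]
  refine mul_le_mul_left (ENNReal.ofReal_le_ofReal ?_) _
  exact pow_le_pow_of_le_one (by positivity) (pow_le_one₀ (by norm_num) (by norm_num)) hd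

theorem omegaD_le_of_mem_dyadicSlab {s : ℝ} {k : ℕ} {ξ : EuclideanSpace ℝ (Fin d)}
    (hξ : ξ ∈ dyadicSlab d h0 k) : omegaD d h0 s ξ ≤ 5 * (1 / 4) ^ k := by
  obtain ⟨hcoord, hlo, hhi⟩ := hξ
  set ρ : ℝ := (1 / 2) ^ k
  have hρ1 : ρ ≤ 1 := pow_le_one₀ (by norm_num) (by norm_num)
  have hlo' : ρ / 2 < ‖ξ‖ := by rwa [pow_succ, mul_one_div] at hlo
  rw [omegaD, if_pos (hhi.trans_le hρ1),
    show (1 / 4 : ℝ) ^ k = ρ ^ 2 by rw [← pow_mul, mul_comm, pow_mul]; norm_num]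
  have hn : 0 < ‖ξ‖ := (by positivity : 0 < ρ / 2).trans hlo'
  have hcoord' : ξ ⟨0, h0⟩ ^ 2 ≤ (ρ ^ 2) ^ 2 := by
    rw [← sq_abs]; exact pow_le_pow_left₀ (abs_nonneg _) hcoord.le 2
  rw [div_le_iff₀ (by positivity)]
  have hρn : ρ ^ 2 ≤ 4 * ‖ξ‖ ^ 2 := by nlinarith
  have hnρ : ‖ξ‖ ^ 2 ≤ ρ ^ 2 := by nlinarith
  nlinarith [mul_le_mul_of_nonneg_left hρn (sq_nonneg ρ),
    mul_le_mul_of_nonneg_left hnρ (sq_nonneg ‖ξ‖)]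

theorem lintegral_omegaD_mul_normalizedIndicatorSum_lt_top (hd : 2 ≤ d) (s : ℝ) :
    ∫⁻ ξ, ENNReal.ofReal (omegaD d h0 s ξ) *
      (‖(normalizedIndicatorSum volume (dyadicSlab d h0) ξ : ℂ)‖₊ : ℝ≥0∞) ^ 2 < ∞ := by
  simp only [Complex.nnnorm_real]
  rw [lintegral_mul_normalizedIndicatorSum_sq (fun k => (isOpen_dyadicSlab k).measurableSet)
    pairwise_disjoint_dyadicSlab (volume_dyadicSlab_pos hd) volume_dyadicSlab_ne_top]
  refine tsum_lt_top_of_le_ofReal_geometric (C := 5) (r := 1 / 4) (by norm_num) (by norm_num)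
    (by norm_num) fun k => ?_
  calc ⨍⁻ ξ in dyadicSlab d h0 k, ENNReal.ofReal (omegaD d h0 s ξ) ∂volume
      ≤ ⨍⁻ _ in dyadicSlab d h0 k, ENNReal.ofReal (5 * (1 / 4) ^ k) ∂volume :=
        laverage_mono_ae (ae_restrict_of_forall_mem (isOpen_dyadicSlab k).measurableSet
          fun _ hξ => ENNReal.ofReal_le_ofReal (omegaD_le_of_mem_dyadicSlab hξ))
    _ = _ := setLAverage_const (volume_dyadicSlab_pos hd k) (volume_dyadicSlab_ne_top k) _

theorem lintegral_rpow_mul_normalizedIndicatorSum_eq_top {s : ℝ} (hs : 0 ≤ s) (hd : 2 ≤ d) :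
    ∫⁻ ξ, ENNReal.ofReal ((1 + ‖ξ‖ ^ 2) ^ s) *
      (‖(normalizedIndicatorSum volume (dyadicSlab d h0) ξ : ℂ)‖₊ : ℝ≥0∞) ^ 2 = ∞ := by
  simp only [Complex.nnnorm_real]
  rw [lintegral_mul_normalizedIndicatorSum_sq (fun k => (isOpen_dyadicSlab k).measurableSet)
    pairwise_disjoint_dyadicSlab (volume_dyadicSlab_pos hd) volume_dyadicSlab_ne_top, eq_top_iff,
    ← ENNReal.tsum_const_eq_top_of_ne_zero (α := ℕ) one_ne_zero]
  refine ENNReal.tsum_le_tsum fun k => ?_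
  calc (1 : ℝ≥0∞) = ⨍⁻ _ in dyadicSlab d h0 k, 1 ∂volume :=
        (setLAverage_one (volume_dyadicSlab_pos hd k) (volume_dyadicSlab_ne_top k)).symm
    _ ≤ _ := laverage_mono_ae (ae_of_all _ fun ξ : EuclideanSpace ℝ (Fin d) =>
        ENNReal.one_le_ofReal.mpr (Real.one_le_rpow (by nlinarith [norm_nonneg ξ]) hs))

theorem integrable_normalizedIndicatorSum_dyadicSlab (hd : 2 ≤ d) :
    Integrable (fun ξ => (normalizedIndicatorSum volume (dyadicSlab d h0) ξ : ℂ)) := by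
  have hm k := (isOpen_dyadicSlab (h0 := h0) k).measurableSet
  refine ⟨(Complex.measurable_ofReal.comp
    (measurable_normalizedIndicatorSum hm)).aestronglyMeasurable, ?_⟩
  rw [hasFiniteIntegral_iff_enorm]
  simp_rw [enorm_eq_nnnorm, Complex.nnnorm_real, ← enorm_eq_nnnorm]
  rw [lintegral_enorm_normalizedIndicatorSum hm pairwise_disjoint_dyadicSlab
    volume_dyadicSlab_ne_top]
  set K := (volume (ball (0 : EuclideanSpace ℝ (Fin d)) 1)).toReal
  refine tsum_lt_top_of_le_ofReal_geometric (C := √K) (r := 1 / 2) (Real.sqrt_nonneg K)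
    (by norm_num) (by norm_num) fun k => ENNReal.ofReal_le_ofReal ?_
  have hv : (volume (dyadicSlab d h0 k)).toReal ≤ ((1 / 2) ^ k) ^ 2 * K := by
    have h := ENNReal.toReal_mono (ENNReal.mul_ne_top ENNReal.ofReal_ne_top measure_ball_lt_top.ne)
      (volume_dyadicSlab_le (h0 := h0) hd k)
    rwa [ENNReal.toReal_mul, ENNReal.toReal_ofReal (by positivity)] at h
  calc √(volume (dyadicSlab d h0 k)).toReal ≤ √(((1 / 2) ^ k) ^ 2 * K) := Real.sqrt_le_sqrt hv
    _ = √K * (1 / 2) ^ k := by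
      rw [Real.sqrt_mul (by positivity), Real.sqrt_sq (by positivity), mul_comm]

end DyadicSlab

/-- `X^s(ℝ^d)` is represented on the Fourier side: an element is a real tempered distribution
`f` whose Fourier transform `F = f̂` is locally integrable with `‖f‖²_{X^s} = ∫ ω_s |F|² < ∞`;
reality means `conj F(ξ) = F(−ξ)`, and `‖f‖²_{H^s} = ∫ (1+|ξ|²)^s |F|²`. -/
theorem stmt_9 (s : ℝ) (hs : 0 ≤ s) :
    (∃ c : ℝ, 0 < c ∧ ∀ F : ℝ → ℂ,
        ENNReal.ofReal c⁻¹ *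
            (∫⁻ ξ, ENNReal.ofReal ((1 + ξ ^ 2) ^ s) * (‖F ξ‖₊ : ℝ≥0∞) ^ 2)
          ≤ (∫⁻ ξ, ENNReal.ofReal (omega1 s ξ) * (‖F ξ‖₊ : ℝ≥0∞) ^ 2) ∧
        (∫⁻ ξ, ENNReal.ofReal (omega1 s ξ) * (‖F ξ‖₊ : ℝ≥0∞) ^ 2)
          ≤ ENNReal.ofReal c *
              ∫⁻ ξ, ENNReal.ofReal ((1 + ξ ^ 2) ^ s) * (‖F ξ‖₊ : ℝ≥0∞) ^ 2) ∧
    (∀ d : ℕ, ∀ hd : 2 ≤ d, ∀ F : EuclideanSpace ℝ (Fin d) → ℂ,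
        (∫⁻ ξ, ENNReal.ofReal (omegaD d (by omega) s ξ) * (‖F ξ‖₊ : ℝ≥0∞) ^ 2) ^ (1/2 : ℝ)
          ≤ 2 * (∫⁻ ξ, ENNReal.ofReal ((1 + ‖ξ‖ ^ 2) ^ s) * (‖F ξ‖₊ : ℝ≥0∞) ^ 2) ^ (1/2 : ℝ)) ∧
    (∀ d : ℕ, ∀ hd : 2 ≤ d, ∃ F : EuclideanSpace ℝ (Fin d) → ℂ,
        (∀ ξ, conj (F ξ) = F (-ξ)) ∧
        LocallyIntegrable F volume ∧
        (∫⁻ ξ, ENNReal.ofReal (omegaD d (by omega) s ξ) * (‖F ξ‖₊ : ℝ≥0∞) ^ 2) < ⊤ ∧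
        (∫⁻ ξ, ENNReal.ofReal ((1 + ‖ξ‖ ^ 2) ^ s) * (‖F ξ‖₊ : ℝ≥0∞) ^ 2) = ⊤) := by
  refine ⟨⟨2 * 2 ^ s, by positivity, fun F => ⟨?_, ?_⟩⟩, fun d _ F => ?_, fun d hd => ?_⟩
  · simpa only [ENNReal.ofReal_one, one_mul] using ofReal_mul_lintegral_le_of_ae_le
      (by positivity) zero_le_one
      ((volume.ae_ne 0).mono fun ξ hξ => by simpa using (omega1_bounds hs hξ).1) _
  · simpa only [ENNReal.ofReal_one, one_mul] using ofReal_mul_lintegral_le_of_ae_le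
      zero_le_one (by positivity)
      ((volume.ae_ne 0).mono fun ξ hξ => by simpa using (omega1_bounds hs hξ).2) _
  · exact lintegral_omegaD_rpow_le hs _ F
  · refine ⟨fun ξ => (normalizedIndicatorSum volume (dyadicSlab d (zero_lt_two.trans_le hd)) ξ : ℂ),
      fun ξ => ?_,
      (integrable_normalizedIndicatorSum_dyadicSlab hd).locallyIntegrable, ?_, ?_⟩
    · simp only [Complex.conj_ofReal,
        normalizedIndicatorSum_neg (B := dyadicSlab d _) (fun _ _ => neg_mem_dyadicSlab)]
    · exact lintegral_omegaD_mul_normalizedIndicatorSum_lt_top hd s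
    · exact lintegral_rpow_mul_normalizedIndicatorSum_eq_top hs hd
end

section
/- Let s ≥ 0, d ≥ 1, R > 0. There exists a constant c = c(d,R,s) > 0 such that for every f in the specialized space X^s(ℝ^d) one has ∫_{B(0,R)} |f̂(ξ)| dξ + (∫_{B(0,R)^c} (1+|ξ|²)^s |f̂(ξ)|² dξ)^{1/2} ≤ c‖f‖_{X^s}. In particular, if s > d/2, then f̂ ∈ L¹(ℝ^d) and ‖f̂‖_{L¹} ≤ c‖f‖_{X^s}. -/
/-! On the ball `B(0,R)`, Cauchy–Schwarz with weight `ω_s` bounds `∫ |f̂|` by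
`(∫_B ω_s⁻¹)^{1/2} ‖f‖_{X^s}`, and `ω_s⁻¹` is integrable on bounded sets although `|ξ|⁻²` is not
when `d = 2`: writing `ξ = (t, y)` with `t = ξ₁` and `q = |y|²`, one has
`ω_s⁻¹ ≤ 1 + q / (t² + q²)`, whose integral in `t` is at most `π`.
Outside the ball `(1 + |ξ|²)^s ≤ max 1 (2^s / R²) ω_s`, and for `s > d/2` the function
`ω_s⁻¹ = (1 + |ξ|²)^{-s}` is integrable near infinity, so Cauchy–Schwarz on all of `ℝ^d`
gives the `L¹` bound. -/

open MeasureTheory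
open scoped ENNReal NNReal

open Real

theorem lintegral_le_weighted_cauchy_schwarz {α : Type*} [MeasurableSpace α] {μ : Measure α}
    {w g : α → ℝ≥0∞} (hw : AEMeasurable w μ)
    (hg : AEMeasurable g μ) (hw0 : ∀ᵐ x ∂μ, w x ≠ 0) (hwtop : ∀ᵐ x ∂μ, w x ≠ ⊤) :
    ∫⁻ x, g x ∂μ ≤
      (∫⁻ x, (w x)⁻¹ ∂μ) ^ (1 / 2 : ℝ) * (∫⁻ x, w x * g x ^ 2 ∂μ) ^ (1 / 2 : ℝ) := by
  have key := ENNReal.lintegral_mul_le_Lp_mul_Lq μ Real.HolderConjugate.two_two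
    (hw.inv.pow_const (1 / 2 : ℝ)) ((hw.mul (hg.pow_const 2)).pow_const (1 / 2 : ℝ))
  have hsq : ∀ a : ℝ≥0∞, (a ^ (1 / 2 : ℝ)) ^ (2 : ℝ) = a := fun a => by
    rw [← ENNReal.rpow_mul]; norm_num
  simp only [Pi.mul_apply, Pi.inv_apply, hsq] at key
  refine le_of_eq_of_le (lintegral_congr_ae ?_) key
  filter_upwards [hw0, hwtop] with x h0 htop
  rw [← ENNReal.mul_rpow_of_nonneg _ _ (by norm_num), ← mul_assoc, ENNReal.inv_mul_cancel h0 htop,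
    one_mul, ← ENNReal.rpow_natCast, ← ENNReal.rpow_mul]
  norm_num

theorem lintegral_ofReal_div_sq_add_sq_le {a : ℝ} (ha : 0 ≤ a) :
    ∫⁻ t : ℝ, ENNReal.ofReal (a / (t ^ 2 + a ^ 2)) ≤ ENNReal.ofReal π := by
  rcases ha.eq_or_lt with rfl | ha
  · simp
  have hfun : (fun t : ℝ => a / (t ^ 2 + a ^ 2)) = fun t => a⁻¹ * (1 + (t / a) ^ 2)⁻¹ := by
    funext t; field_simp; ring
  have hint : Integrable (fun t : ℝ => a / (t ^ 2 + a ^ 2)) := by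
    rw [hfun]
    exact (integrable_inv_one_add_sq.comp_div ha.ne').const_mul _
  rw [← ofReal_integral_eq_lintegral_ofReal hint (.of_forall fun t => by positivity), hfun,
    integral_const_mul, Measure.integral_comp_div (fun u : ℝ => (1 + u ^ 2)⁻¹) a,
    integral_univ_inv_one_add_sq, abs_of_pos ha, smul_eq_mul, inv_mul_cancel_left₀ ha.ne']

theorem sq_add_div_le_one_add_div_sq_add_sq {t q : ℝ} (hq : 0 ≤ q) (h : 0 < t ^ 2 + q) :
    (t ^ 2 + q) / (t ^ 2 + (t ^ 2 + q) ^ 2) ≤ 1 + q / (t ^ 2 + q ^ 2) := by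
  have hden : 0 < t ^ 2 + (t ^ 2 + q) ^ 2 := by positivity
  have hq2 : 0 < t ^ 2 + q ^ 2 := by
    rcases hq.eq_or_lt with rfl | hq
    · simpa using h
    · positivity
  rw [add_div]
  gcongr
  · rw [div_le_one hden]; nlinarith [sq_nonneg (t ^ 2 + q)]
  · nlinarith [sq_nonneg t]

section Weight

variable {d : ℕ} (hd : 0 < d) {s : ℝ} {ξ : EuclideanSpace ℝ (Fin d)}

theorem measurable_omegaD (s : ℝ) : Measurable (omegaD d hd s) := by
  have h0 : Measurable fun ξ : EuclideanSpace ℝ (Fin d) => ξ ⟨0, hd⟩ :=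
    (EuclideanSpace.proj (⟨0, hd⟩ : Fin d)).continuous.measurable
  exact Measurable.ite (measurableSet_lt measurable_norm measurable_const) (by fun_prop)
    (by fun_prop)

theorem omegaD_pos (hξ : ξ ≠ 0) : 0 < omegaD d hd s ξ := by
  have := norm_pos_iff.mpr hξ
  unfold omegaD
  split_ifs <;> positivity

theorem omegaD_of_one_le_norm (h : 1 ≤ ‖ξ‖) : omegaD d hd s ξ = (1 + ‖ξ‖ ^ 2) ^ s :=
  if_neg h.not_gt

theorem inv_omegaD_le (hs : 0 ≤ s) (hξ : ξ ≠ 0) {q : ℝ} (hq : 0 ≤ q)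
    (hnorm : ξ ⟨0, hd⟩ ^ 2 + q = ‖ξ‖ ^ 2) :
    (omegaD d hd s ξ)⁻¹ ≤ 1 + q / (ξ ⟨0, hd⟩ ^ 2 + q ^ 2) := by
  by_cases h1 : ‖ξ‖ < 1
  · have hpos : 0 < ξ ⟨0, hd⟩ ^ 2 + q := by rw [hnorm]; positivity [norm_pos_iff.mpr hξ]
    rw [omegaD, if_pos h1, inv_div, ← hnorm, show ‖ξ‖ ^ 4 = (‖ξ‖ ^ 2) ^ 2 by ring, ← hnorm]
    exact sq_add_div_le_one_add_div_sq_add_sq hq hpos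
  · rw [omegaD_of_one_le_norm hd (not_lt.mp h1)]
    have : 0 ≤ q / (ξ ⟨0, hd⟩ ^ 2 + q ^ 2) := by positivity
    have : ((1 + ‖ξ‖ ^ 2) ^ s)⁻¹ ≤ 1 := inv_le_one_of_one_le₀ (one_le_rpow (by nlinarith) hs)
    linarith

theorem one_add_sq_rpow_le_mul_omegaD (hs : 0 ≤ s) {R : ℝ} (hR : 0 < R) (hξ : R ≤ ‖ξ‖) :
    (1 + ‖ξ‖ ^ 2) ^ s ≤ max 1 (2 ^ s / R ^ 2) * omegaD d hd s ξ := by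
  have hξ0 : 0 < ‖ξ‖ := hR.trans_le hξ
  by_cases h1 : ‖ξ‖ < 1
  · have hω : R ^ 2 ≤ omegaD d hd s ξ := by
      rw [omegaD, if_pos h1, le_div_iff₀ (by positivity)]
      nlinarith [sq_nonneg (ξ ⟨0, hd⟩), pow_le_pow_left₀ hR.le hξ 2, sq_nonneg ‖ξ‖]
    calc (1 + ‖ξ‖ ^ 2) ^ s ≤ 2 ^ s := rpow_le_rpow (by positivity) (by nlinarith) hs
      _ = 2 ^ s / R ^ 2 * R ^ 2 := by field_simp
      _ ≤ max 1 (2 ^ s / R ^ 2) * omegaD d hd s ξ := by gcongr; exact le_max_right _ _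
  · rw [omegaD_of_one_le_norm hd (not_lt.mp h1)]
    exact le_mul_of_one_le_left (by positivity) (le_max_left _ _)

end Weight

section Integrability

open Set

variable {d : ℕ} (hd : 0 < d) {s : ℝ}

theorem lintegral_ball_inv_omegaD_lt_top (hs : 0 ≤ s) (R : ℝ) :
    ∫⁻ ξ in Metric.ball 0 R, (ENNReal.ofReal (omegaD d hd s ξ))⁻¹ < ⊤ := by
  obtain ⟨m, rfl⟩ : ∃ m, d = m + 1 := ⟨d - 1, (Nat.succ_pred_eq_of_pos hd).symm⟩
  let Φ : EuclideanSpace ℝ (Fin (m + 1)) → ℝ × (Fin m → ℝ) := fun ξ =>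
    MeasurableEquiv.piFinSuccAbove (fun _ => ℝ) 0 ((MeasurableEquiv.toLp 2 _).symm ξ)
  have hΦ : MeasurePreserving Φ := (volume_preserving_piFinSuccAbove (fun _ => ℝ) 0).comp
    (EuclideanSpace.volume_preserving_symm_measurableEquiv_toLp (Fin (m + 1)))
  let q : (Fin m → ℝ) → ℝ := fun y => ∑ i, y i ^ 2
  have hq : ∀ y, 0 ≤ q y := fun y => by positivity
  let g : ℝ × (Fin m → ℝ) → ℝ≥0∞ := fun p => ENNReal.ofReal (q p.2 / (p.1 ^ 2 + q p.2 ^ 2))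
  have hg : Measurable g := by fun_prop
  let S := {y : Fin m → ℝ | q y < R ^ 2}
  have hnorm : ∀ ξ, ξ 0 ^ 2 + q (Φ ξ).2 = ‖ξ‖ ^ 2 := fun ξ => by
    rw [EuclideanSpace.norm_sq_eq, Fin.sum_univ_succAbove _ 0]
    simp [Φ, q]
    rfl
  have hball : Metric.ball 0 R ⊆ Φ ⁻¹' (univ ×ˢ S) := fun ξ hξ => by
    have hξR : ‖ξ‖ < R := mem_ball_zero_iff.mp hξ
    have : ‖ξ‖ ^ 2 < R ^ 2 := by gcongr
    simp only [mem_preimage, mem_prod, mem_univ, true_and, S, mem_ofPred_eq]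
    nlinarith [hnorm ξ, sq_nonneg (ξ 0)]
  have hS : volume S < ⊤ := by
    refine (measure_mono fun y (hy : q y < R ^ 2) => ?_).trans_lt
      (measure_closedBall_lt_top (x := 0) (r := |R|))
    refine mem_closedBall_zero_iff.mpr ((pi_norm_le_iff_of_nonneg (abs_nonneg R)).mpr fun i => ?_)
    rw [Real.norm_eq_abs]
    exact sq_le_sq.mp <| (Finset.single_le_sum (fun j _ => sq_nonneg (y j))
      (Finset.mem_univ i)).trans hy.le
  have hpt : ∀ᵐ ξ, (ENNReal.ofReal (omegaD (m + 1) hd s ξ))⁻¹ ≤ 1 + g (Φ ξ) := by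
    filter_upwards [Measure.ae_ne volume 0] with ξ hξ
    rw [← ENNReal.ofReal_inv_of_pos (omegaD_pos hd hξ), ← ENNReal.ofReal_one,
      ← ENNReal.ofReal_add zero_le_one (by positivity)]
    exact ENNReal.ofReal_le_ofReal (inv_omegaD_le hd hs hξ (hq _) (hnorm ξ))
  calc ∫⁻ ξ in Metric.ball 0 R, (ENNReal.ofReal (omegaD (m + 1) hd s ξ))⁻¹
      ≤ ∫⁻ ξ in Metric.ball 0 R, (1 + g (Φ ξ)) := lintegral_mono_ae (ae_restrict_of_ae hpt)
    _ = volume (Metric.ball (0 : EuclideanSpace ℝ (Fin (m + 1))) R) +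
          ∫⁻ ξ in Metric.ball 0 R, g (Φ ξ) := by
        rw [lintegral_add_left measurable_const, setLIntegral_const, one_mul]
    _ ≤ volume (Metric.ball (0 : EuclideanSpace ℝ (Fin (m + 1))) R) +
          ∫⁻ ξ in Φ ⁻¹' (univ ×ˢ S), g (Φ ξ) := by gcongr
    _ = volume (Metric.ball (0 : EuclideanSpace ℝ (Fin (m + 1))) R) +
          ∫⁻ y in S, ∫⁻ t, g (t, y) := by
        rw [hΦ.setLIntegral_comp_preimage (MeasurableSet.univ.prod
          (measurableSet_lt (by fun_prop) measurable_const)) hg, Measure.volume_eq_prod,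
          setLIntegral_prod_symm _ hg.aemeasurable, Measure.restrict_univ]
    _ ≤ volume (Metric.ball (0 : EuclideanSpace ℝ (Fin (m + 1))) R) +
          ∫⁻ _ in S, ENNReal.ofReal π := by
        gcongr with y
        exact lintegral_ofReal_div_sq_add_sq_le (hq y)
    _ < ⊤ := by
        rw [setLIntegral_const]
        exact ENNReal.add_lt_top.2
          ⟨measure_ball_lt_top, ENNReal.mul_lt_top ENNReal.ofReal_lt_top hS⟩

theorem lintegral_inv_omegaD_lt_top (hs : (d : ℝ) / 2 < s) :
    ∫⁻ ξ, (ENNReal.ofReal (omegaD d hd s ξ))⁻¹ < ⊤ := by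
  rw [← lintegral_add_compl _ (measurableSet_ball (x := 0) (ε := 1))]
  refine ENNReal.add_lt_top.2
    ⟨lintegral_ball_inv_omegaD_lt_top hd (le_trans (by positivity) hs.le) 1, ?_⟩
  have hint : Integrable fun ξ : EuclideanSpace ℝ (Fin d) => (1 + ‖ξ‖ ^ 2) ^ (-s) := by
    simpa [neg_div] using integrable_rpow_neg_one_add_norm_sq
      (E := EuclideanSpace ℝ (Fin d)) (μ := volume) (r := 2 * s)
      (by rw [finrank_euclideanSpace_fin]; linarith)
  refine lt_of_le_of_lt ?_ hint.lintegral_lt_top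
  refine (setLIntegral_le_lintegral _ _).trans' (setLIntegral_mono' measurableSet_ball.compl ?_)
  intro ξ hξ
  rw [omegaD_of_one_le_norm hd (by simpa using hξ), ← ENNReal.ofReal_inv_of_pos (by positivity),
    ← rpow_neg (by positivity)]

end Integrability

section Estimates

variable {d : ℕ} (hd : 0 < d) {s : ℝ}

theorem setLIntegral_le_sqrt_inv_omegaD_mul {g : EuclideanSpace ℝ (Fin d) → ℝ≥0∞}
    (hg : AEMeasurable g) (S : Set (EuclideanSpace ℝ (Fin d))) :
    ∫⁻ ξ in S, g ξ ≤ (∫⁻ ξ in S, (ENNReal.ofReal (omegaD d hd s ξ))⁻¹) ^ (1 / 2 : ℝ) *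
      (∫⁻ ξ, ENNReal.ofReal (omegaD d hd s ξ) * g ξ ^ 2) ^ (1 / 2 : ℝ) := by
  refine (lintegral_le_weighted_cauchy_schwarz
    (measurable_omegaD hd s).ennreal_ofReal.aemeasurable hg.restrict ?_ ?_).trans ?_
  · have : Nonempty (Fin d) := ⟨⟨0, hd⟩⟩
    exact ae_restrict_of_ae <| (Measure.ae_ne volume 0).mono fun ξ hξ =>
      (ENNReal.ofReal_pos.2 (omegaD_pos hd hξ)).ne'
  · exact .of_forall fun _ => ENNReal.ofReal_ne_top
  · gcongr
    exact Measure.restrict_le_self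

theorem setLIntegral_compl_ball_one_add_sq_rpow_le (hs : 0 ≤ s) {R : ℝ} (hR : 0 < R)
    (g : EuclideanSpace ℝ (Fin d) → ℝ≥0∞) :
    ∫⁻ ξ in (Metric.ball 0 R)ᶜ, ENNReal.ofReal ((1 + ‖ξ‖ ^ 2) ^ s) * g ξ ≤
      ENNReal.ofReal (max 1 (2 ^ s / R ^ 2)) *
        ∫⁻ ξ, ENNReal.ofReal (omegaD d hd s ξ) * g ξ := by
  rw [← lintegral_const_mul' _ _ ENNReal.ofReal_ne_top]
  refine (setLIntegral_mono' measurableSet_ball.compl fun ξ hξ => ?_).trans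
    (setLIntegral_le_lintegral _ _)
  rw [← mul_assoc, ← ENNReal.ofReal_mul (by positivity)]
  gcongr
  exact one_add_sq_rpow_le_mul_omegaD hd hs hR (by simpa using hξ)

end Estimates

/-- (Fourier-side formulation; `F` represents `f̂` and
`‖f‖²_{X^s} = ∫ ω_s |F|²`.)  For `s ≥ 0` and `R > 0` there is `c = c(d,R,s) > 0` with
`∫_{B(0,R)} |f̂| dξ + (∫_{B(0,R)^c} (1+|ξ|²)^s |f̂|² dξ)^{1/2} ≤ c ‖f‖_{X^s}` for every
`f ∈ X^s(ℝ^d)`.  In particular, if `s > d/2` then `f̂ ∈ L¹(ℝ^d)` with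
`‖f̂‖_{L¹} ≤ c ‖f‖_{X^s}`. -/
theorem stmt_10 (d : ℕ) (hd : 0 < d) (s : ℝ) (hs : 0 ≤ s) (R : ℝ) (hR : 0 < R) :
    ∃ c : ℝ, 0 < c ∧
      (∀ F : EuclideanSpace ℝ (Fin d) → ℂ, AEMeasurable F →
        (∫⁻ ξ in Metric.ball 0 R, (‖F ξ‖₊ : ℝ≥0∞)) +
            (∫⁻ ξ in (Metric.ball (0 : EuclideanSpace ℝ (Fin d)) R)ᶜ,
              ENNReal.ofReal ((1 + ‖ξ‖ ^ 2) ^ s) * (‖F ξ‖₊ : ℝ≥0∞) ^ 2) ^ (1/2 : ℝ)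
          ≤ ENNReal.ofReal c *
            (∫⁻ ξ, ENNReal.ofReal (omegaD d hd s ξ) * (‖F ξ‖₊ : ℝ≥0∞) ^ 2) ^ (1/2 : ℝ)) ∧
      ((d : ℝ) / 2 < s →
        ∀ F : EuclideanSpace ℝ (Fin d) → ℂ, AEMeasurable F →
          (∫⁻ ξ, (‖F ξ‖₊ : ℝ≥0∞))
            ≤ ENNReal.ofReal c *
              (∫⁻ ξ, ENNReal.ofReal (omegaD d hd s ξ) * (‖F ξ‖₊ : ℝ≥0∞) ^ 2) ^ (1/2 : ℝ)) := by
  set A := (∫⁻ ξ in Metric.ball 0 R, (ENNReal.ofReal (omegaD d hd s ξ))⁻¹) ^ (1 / 2 : ℝ)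
  set B := ENNReal.ofReal (max 1 (2 ^ s / R ^ 2)) ^ (1 / 2 : ℝ)
  set D := (∫⁻ ξ, (ENNReal.ofReal (omegaD d hd s ξ))⁻¹) ^ (1 / 2 : ℝ)
  have hAB : A + B ≠ ⊤ := ENNReal.add_ne_top.2
    ⟨ENNReal.rpow_ne_top_of_nonneg (by norm_num) (lintegral_ball_inv_omegaD_lt_top hd hs R).ne,
      ENNReal.rpow_ne_top_of_nonneg (by norm_num) ENNReal.ofReal_ne_top⟩
  -- `D` is infinite (and `D.toReal = 0`) when `s ≤ d / 2`; it is only used when `d / 2 < s`.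
  refine ⟨(A + B).toReal + D.toReal + 1, by positivity, fun F hF => ?_, fun hds F hF => ?_⟩
  all_goals set I := (∫⁻ ξ, ENNReal.ofReal (omegaD d hd s ξ) * (‖F ξ‖₊ : ℝ≥0∞) ^ 2) ^ (1 / 2 : ℝ)
  · calc _ ≤ A * I + B * I := by
          gcongr
          · exact setLIntegral_le_sqrt_inv_omegaD_mul hd hF.nnnorm.coe_nnreal_ennreal _
          · rw [← ENNReal.mul_rpow_of_nonneg _ _ (by norm_num)]
            exact ENNReal.rpow_le_rpow
              (setLIntegral_compl_ball_one_add_sq_rpow_le hd hs hR _) (by norm_num)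
      _ = (A + B) * I := (add_mul _ _ _).symm
      _ ≤ _ := by
          gcongr
          rw [ENNReal.le_ofReal_iff_toReal_le hAB (by positivity)]
          linarith [ENNReal.toReal_nonneg (a := D)]
  · have hD : D ≠ ⊤ := ENNReal.rpow_ne_top_of_nonneg (by norm_num)
      (lintegral_inv_omegaD_lt_top hd hds).ne
    have hCS := setLIntegral_le_sqrt_inv_omegaD_mul hd (s := s) hF.nnnorm.coe_nnreal_ennreal .univ
    rw [Measure.restrict_univ] at hCS
    calc _ ≤ D * I := hCS
      _ ≤ _ := by
          gcongr
          rw [ENNReal.le_ofReal_iff_toReal_le hD (by positivity)]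
          linarith [ENNReal.toReal_nonneg (a := A + B)]
end

section
/- Let s > d/2 and 0 ≤ r ≤ s. There exists c = c(r,s,d) > 0 such that ‖fg‖_{H^r(ℝ^d)} ≤ c‖f‖_{H^s(ℝ^d)}‖g‖_{H^r(ℝ^d)} for all f ∈ H^s(ℝ^d) and g ∈ H^r(ℝ^d). -/
open MeasureTheory
open scoped ENNReal

/-!
On the Fourier side the product `fg` becomes the convolution `F ∗ G`, and the claim is a
weighted `L²` bound for it. Since `⟨ξ⟩ ≤ 2 max (⟨z⟩, ⟨ξ - z⟩)` and `r ≤ s`,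
`⟨ξ⟩ ^ r ≤ 2 ^ r ⟨z⟩ ^ s ⟨ξ - z⟩ ^ r (⟨z⟩ ^ (-s) + ⟨ξ - z⟩ ^ (-s))`,
so `⟨ξ⟩ ^ r |F ∗ G| (ξ)` is bounded by `2 ^ r ∫ Φ(z) Ψ(ξ - z) (U(z) + U(ξ - z)) dz` with
`Φ = ⟨·⟩ ^ s |F|`, `Ψ = ⟨·⟩ ^ r |G|` and `U = ⟨·⟩ ^ (-s)`. Cauchy–Schwarz in `z` bounds the
square of this by `4 ‖U‖₂² ∫ Φ(z)² Ψ(ξ - z)² dz`, whose integral in `ξ` is `‖Φ‖₂² ‖Ψ‖₂²`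
by Tonelli. Finally `‖U‖₂² = ∫ (1 + |z|²) ^ (-s) dz` is finite exactly because `s > d/2`.
-/

theorem one_add_norm_add_sq_le {E : Type*} [SeminormedAddGroup E] (x y : E) :
    1 + ‖x + y‖ ^ 2 ≤ 4 * max (1 + ‖x‖ ^ 2) (1 + ‖y‖ ^ 2) := by
  have htri := norm_add_le x y
  have hsq : ‖x + y‖ ^ 2 ≤ (‖x‖ + ‖y‖) ^ 2 := by gcongr
  nlinarith [le_max_left (1 + ‖x‖ ^ 2) (1 + ‖y‖ ^ 2), le_max_right (1 + ‖x‖ ^ 2) (1 + ‖y‖ ^ 2),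
    sq_nonneg (‖x‖ - ‖y‖)]

theorem Real.max_rpow_le_rpow_mul_rpow_mul_add_rpow_neg {a b p q : ℝ} (ha : 0 < a) (hb : 0 < b)
    (hpq : p ≤ q) : max a b ^ p ≤ a ^ q * b ^ p * (a ^ (-q) + b ^ (-q)) := by
  rcases le_total a b with hab | hab
  · rw [max_eq_right hab]
    calc b ^ p = a ^ q * b ^ p * a ^ (-q) := by
          rw [Real.rpow_neg ha.le]; field_simp
      _ ≤ _ := by gcongr; exact le_add_of_nonneg_right (by positivity)
  · rw [max_eq_left hab]
    calc a ^ p = a ^ q * a ^ (p - q) := by rw [← Real.rpow_add ha]; ring_nf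
      _ ≤ a ^ q * b ^ (p - q) := by
          have := Real.rpow_le_rpow_of_nonpos hb hab (by linarith : p - q ≤ 0)
          gcongr
      _ = a ^ q * b ^ p * b ^ (-q) := by rw [sub_eq_add_neg, Real.rpow_add hb]; ring
      _ ≤ _ := by gcongr; exact le_add_of_nonneg_left (by positivity)

theorem ENNReal.add_sq_le_four_mul {a b c : ℝ≥0∞} (ha : a ^ 2 ≤ c) (hb : b ^ 2 ≤ c) :
    (a + b) ^ 2 ≤ 4 * c := by
  have key : ∀ {x y : ℝ≥0∞}, x ≤ y → y ^ 2 ≤ c → (x + y) ^ 2 ≤ 4 * c := fun {x y} hxy hy =>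
    calc (x + y) ^ 2 ≤ (2 * y) ^ 2 := by rw [two_mul]; gcongr
      _ = 4 * y ^ 2 := by rw [mul_pow]; norm_num
      _ ≤ 4 * c := by gcongr
  rcases le_total a b with hab | hab
  · exact key hab hb
  · rw [add_comm]; exact key hab ha

theorem ENNReal.lintegral_mul_sq_le {α : Type*} [MeasurableSpace α] {μ : Measure α}
    {f g : α → ℝ≥0∞} (hf : AEMeasurable f μ) (hg : AEMeasurable g μ) :
    (∫⁻ a, f a * g a ∂μ) ^ 2 ≤ (∫⁻ a, f a ^ 2 ∂μ) * ∫⁻ a, g a ^ 2 ∂μ := by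
  have hsq : ∀ x : ℝ≥0∞, (x ^ (1 / 2 : ℝ)) ^ 2 = x := fun x => by
    rw [← ENNReal.rpow_natCast, ← ENNReal.rpow_mul]; norm_num
  calc (∫⁻ a, f a * g a ∂μ) ^ 2
      ≤ ((∫⁻ a, f a ^ (2 : ℝ) ∂μ) ^ (1 / 2 : ℝ) * (∫⁻ a, g a ^ (2 : ℝ) ∂μ) ^ (1 / 2 : ℝ)) ^ 2 := by
        gcongr; exact ENNReal.lintegral_mul_le_Lp_mul_Lq μ .two_two hf hg
    _ = _ := by simp only [mul_pow, hsq, ENNReal.rpow_two]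

/-- `⟨x⟩ ^ t` for the Japanese bracket `⟨x⟩ = √(1 + ‖x‖²)`. -/
noncomputable def bracketPow {E : Type*} [Norm E] (t : ℝ) (x : E) : ℝ≥0∞ :=
  ENNReal.ofReal ((1 + ‖x‖ ^ 2) ^ (t / 2))

section BracketPow

variable {E : Type*} [SeminormedAddGroup E]

theorem bracketPow_ne_top (t : ℝ) (x : E) : bracketPow t x ≠ ∞ := ENNReal.ofReal_ne_top

theorem bracketPow_sq (t : ℝ) (x : E) :
    bracketPow t x ^ 2 = ENNReal.ofReal ((1 + ‖x‖ ^ 2) ^ t) := by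
  rw [bracketPow, ← ENNReal.ofReal_pow (by positivity), ← Real.rpow_mul_natCast (by positivity)]
  norm_num

theorem measurable_bracketPow [MeasurableSpace E] [OpensMeasurableSpace E] (t : ℝ) :
    Measurable (bracketPow (E := E) t) := by
  unfold bracketPow; fun_prop

theorem bracketPow_add_le {r s : ℝ} (hr : 0 ≤ r) (hrs : r ≤ s) (x y : E) :
    bracketPow r (x + y) ≤ ENNReal.ofReal (2 ^ r) *
      (bracketPow s x * bracketPow r y * (bracketPow (-s) x + bracketPow (-s) y)) := by
  set A := 1 + ‖x‖ ^ 2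
  set B := 1 + ‖y‖ ^ 2
  have hA : 0 < A := by positivity
  have hB : 0 < B := by positivity
  have hreal : (1 + ‖x + y‖ ^ 2) ^ (r / 2) ≤
      2 ^ r * (A ^ (s / 2) * B ^ (r / 2) * (A ^ (-s / 2) + B ^ (-s / 2))) :=
    calc (1 + ‖x + y‖ ^ 2) ^ (r / 2) ≤ (4 * max A B) ^ (r / 2) := by
          gcongr; exact one_add_norm_add_sq_le x y
      _ = 2 ^ r * max A B ^ (r / 2) := by
          rw [Real.mul_rpow (by norm_num) (by positivity), show (4 : ℝ) = 2 ^ (2 : ℝ) by norm_num,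
            ← Real.rpow_mul (by norm_num)]
          ring_nf
      _ ≤ _ := by
          rw [neg_div]
          gcongr
          exact Real.max_rpow_le_rpow_mul_rpow_mul_add_rpow_neg hA hB (by linarith)
  unfold bracketPow
  rw [← ENNReal.ofReal_add (by positivity) (by positivity),
    ← ENNReal.ofReal_mul (by positivity), ← ENNReal.ofReal_mul (by positivity),
    ← ENNReal.ofReal_mul (by positivity)]
  exact ENNReal.ofReal_le_ofReal hreal

end BracketPow

theorem lintegral_bracketPow_neg_sq_lt_top {E : Type*} [NormedAddCommGroup E] [NormedSpace ℝ E]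
    [FiniteDimensional ℝ E] [MeasurableSpace E] [BorelSpace E] (μ : Measure E)
    [μ.IsAddHaarMeasure] {s : ℝ} (hs : (Module.finrank ℝ E : ℝ) / 2 < s) :
    ∫⁻ x, bracketPow (-s) x ^ 2 ∂μ < ∞ := by
  have hint := integrable_rpow_neg_one_add_norm_sq (μ := μ) (r := 2 * s) (by linarith)
  rw [show -(2 * s) / 2 = -s by ring] at hint
  simpa only [bracketPow_sq] using hint.lintegral_lt_top

section Convolution

variable {G : Type*} [AddCommGroup G] [MeasurableSpace G] [MeasurableAdd₂ G]
  {μ : Measure G} [μ.IsAddLeftInvariant]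

theorem AEMeasurable.comp_sub_right {Ψ : G → ℝ≥0∞} (hΨ : AEMeasurable Ψ μ) (z : G) :
    AEMeasurable (fun ξ => Ψ (ξ - z)) μ :=
  hΨ.comp_quasiMeasurePreserving (measurePreserving_sub_right μ z).quasiMeasurePreserving

theorem AEMeasurable.comp_sub_left [MeasurableNeg G] [μ.IsNegInvariant] {Ψ : G → ℝ≥0∞}
    (hΨ : AEMeasurable Ψ μ) (ξ : G) : AEMeasurable (fun z => Ψ (ξ - z)) μ :=
  hΨ.comp_quasiMeasurePreserving (Measure.measurePreserving_sub_left μ ξ).quasiMeasurePreserving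

theorem sq_lintegral_mul_sub_mul_add_le [MeasurableNeg G] [μ.IsNegInvariant] {U Φ Ψ : G → ℝ≥0∞}
    (hU : AEMeasurable U μ) (hΦ : AEMeasurable Φ μ) (hΨ : AEMeasurable Ψ μ) (ξ : G) :
    (∫⁻ z, Φ z * Ψ (ξ - z) * (U z + U (ξ - z)) ∂μ) ^ 2 ≤
      4 * ((∫⁻ z, U z ^ 2 ∂μ) * ∫⁻ z, Φ z ^ 2 * Ψ (ξ - z) ^ 2 ∂μ) := by
  have hΦΨ : AEMeasurable (fun z => Φ z * Ψ (ξ - z)) μ := hΦ.mul (hΨ.comp_sub_left ξ)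
  have cauchySchwarz : ∀ V : G → ℝ≥0∞, AEMeasurable V μ →
      ∫⁻ z, V z ^ 2 ∂μ = ∫⁻ z, U z ^ 2 ∂μ →
      (∫⁻ z, Φ z * Ψ (ξ - z) * V z ∂μ) ^ 2 ≤
        (∫⁻ z, U z ^ 2 ∂μ) * ∫⁻ z, Φ z ^ 2 * Ψ (ξ - z) ^ 2 ∂μ := fun V hV hV2 => by
    simpa only [mul_comm, mul_pow, hV2] using ENNReal.lintegral_mul_sq_le hV hΦΨ
  simp only [mul_add]
  rw [lintegral_add_left' (f := fun z => Φ z * Ψ (ξ - z) * U z) (hΦΨ.mul hU)]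
  exact ENNReal.add_sq_le_four_mul (cauchySchwarz U hU rfl)
    (cauchySchwarz _ (hU.comp_sub_left ξ) (lintegral_sub_left_eq_self (U · ^ 2) ξ))

theorem AEMeasurable.mul_comp_sub [MeasurableNeg G] [SFinite μ] {Φ Ψ : G → ℝ≥0∞}
    (hΦ : AEMeasurable Φ μ) (hΨ : AEMeasurable Ψ μ) :
    AEMeasurable (fun p : G × G => Φ p.2 * Ψ (p.1 - p.2)) (μ.prod μ) :=
  have hΨsub : AEMeasurable (fun p : G × G => Ψ (p.1 - p.2)) (μ.prod μ) :=
    hΨ.comp_quasiMeasurePreserving (quasiMeasurePreserving_sub μ μ)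
  have hΦsnd : AEMeasurable (fun p : G × G => Φ p.2) (μ.prod μ) := hΦ.comp_snd
  hΦsnd.mul hΨsub

theorem lintegral_lintegral_mul_sub [MeasurableNeg G] [SFinite μ] {Φ Ψ : G → ℝ≥0∞}
    (hΦ : AEMeasurable Φ μ) (hΨ : AEMeasurable Ψ μ) :
    ∫⁻ ξ, ∫⁻ z, Φ z * Ψ (ξ - z) ∂μ ∂μ = (∫⁻ z, Φ z ∂μ) * ∫⁻ z, Ψ z ∂μ := by
  rw [lintegral_lintegral_swap (hΦ.mul_comp_sub hΨ), ← lintegral_mul_const'' _ hΦ]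
  refine lintegral_congr fun z => ?_
  rw [lintegral_const_mul'' _ (hΨ.comp_sub_right z), lintegral_sub_right_eq_self]

theorem lintegral_sq_lintegral_mul_sub_mul_add_le [MeasurableNeg G] [μ.IsNegInvariant] [SFinite μ]
    {U Φ Ψ : G → ℝ≥0∞} (hU : AEMeasurable U μ) (hΦ : AEMeasurable Φ μ) (hΨ : AEMeasurable Ψ μ) :
    ∫⁻ ξ, (∫⁻ z, Φ z * Ψ (ξ - z) * (U z + U (ξ - z)) ∂μ) ^ 2 ∂μ ≤
      4 * (∫⁻ z, U z ^ 2 ∂μ) * (∫⁻ z, Φ z ^ 2 ∂μ) * ∫⁻ z, Ψ z ^ 2 ∂μ := by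
  have hΦ2 := hΦ.pow_const 2
  have hΨ2 := hΨ.pow_const 2
  calc _ ≤ ∫⁻ ξ, 4 * ((∫⁻ z, U z ^ 2 ∂μ) * ∫⁻ z, Φ z ^ 2 * Ψ (ξ - z) ^ 2 ∂μ) ∂μ :=
        lintegral_mono fun ξ => sq_lintegral_mul_sub_mul_add_le hU hΦ hΨ ξ
    _ = 4 * (∫⁻ z, U z ^ 2 ∂μ) * ∫⁻ ξ, ∫⁻ z, Φ z ^ 2 * Ψ (ξ - z) ^ 2 ∂μ ∂μ := by
        rw [← lintegral_const_mul'' _ (hΦ2.mul_comp_sub hΨ2).lintegral_prod_right']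
        simp only [mul_assoc]
    _ = _ := by rw [lintegral_lintegral_mul_sub hΦ2 hΨ2]; ring

end Convolution

section FourierSide

variable {E 𝕜 : Type*} [NormedAddCommGroup E] [MeasurableSpace E] {μ : Measure E}
  [NormedRing 𝕜] [NormedSpace ℝ 𝕜] {r s : ℝ}

theorem ofReal_rpow_mul_enorm_integral_mul_sub_sq_le (hr : 0 ≤ r) (hrs : r ≤ s) (F G : E → 𝕜)
    (ξ : E) :
    ENNReal.ofReal ((1 + ‖ξ‖ ^ 2) ^ r) * ‖∫ z, F z * G (ξ - z) ∂μ‖ₑ ^ 2 ≤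
      ENNReal.ofReal (2 ^ r) ^ 2 * (∫⁻ z, bracketPow s z * ‖F z‖ₑ *
        (bracketPow r (ξ - z) * ‖G (ξ - z)‖ₑ) *
          (bracketPow (-s) z + bracketPow (-s) (ξ - z)) ∂μ) ^ 2 := by
  rw [← bracketPow_sq, ← mul_pow, ← mul_pow]
  gcongr ?_ ^ 2
  calc bracketPow r ξ * ‖∫ z, F z * G (ξ - z) ∂μ‖ₑ
      ≤ bracketPow r ξ * ∫⁻ z, ‖F z‖ₑ * ‖G (ξ - z)‖ₑ ∂μ := by
        gcongr
        refine (enorm_integral_le_lintegral_enorm _).trans (lintegral_mono fun z => ?_)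
        simpa only [enorm, ← ENNReal.coe_mul] using ENNReal.coe_le_coe.2 (nnnorm_mul_le _ _)
    _ = ∫⁻ z, bracketPow r ξ * (‖F z‖ₑ * ‖G (ξ - z)‖ₑ) ∂μ :=
        (lintegral_const_mul' _ _ (bracketPow_ne_top r ξ)).symm
    _ ≤ ∫⁻ z, ENNReal.ofReal (2 ^ r) * (bracketPow s z * ‖F z‖ₑ *
          (bracketPow r (ξ - z) * ‖G (ξ - z)‖ₑ) *
            (bracketPow (-s) z + bracketPow (-s) (ξ - z))) ∂μ := by
        refine lintegral_mono fun z => ?_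
        have hweight := bracketPow_add_le hr hrs z (ξ - z)
        rw [add_sub_cancel] at hweight
        calc bracketPow r ξ * (‖F z‖ₑ * ‖G (ξ - z)‖ₑ)
            ≤ ENNReal.ofReal (2 ^ r) * (bracketPow s z * bracketPow r (ξ - z) *
                (bracketPow (-s) z + bracketPow (-s) (ξ - z))) * (‖F z‖ₑ * ‖G (ξ - z)‖ₑ) := by
              gcongr
          _ = _ := by ring
    _ = _ := lintegral_const_mul' _ _ ENNReal.ofReal_ne_top

theorem lintegral_ofReal_rpow_mul_enorm_integral_mul_sub_sq_le [OpensMeasurableSpace E]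
    [MeasurableSpace 𝕜] [OpensMeasurableSpace 𝕜] [MeasurableAdd₂ E] [MeasurableNeg E] [SFinite μ]
    [μ.IsAddLeftInvariant] [μ.IsNegInvariant]
    (hr : 0 ≤ r) (hrs : r ≤ s) {F G : E → 𝕜} (hF : AEMeasurable F μ) (hG : AEMeasurable G μ) :
    ∫⁻ ξ, ENNReal.ofReal ((1 + ‖ξ‖ ^ 2) ^ r) * ‖∫ z, F z * G (ξ - z) ∂μ‖ₑ ^ 2 ∂μ ≤
      ENNReal.ofReal (2 ^ r) ^ 2 * 4 * (∫⁻ z, bracketPow (-s) z ^ 2 ∂μ) *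
        (∫⁻ ξ, ENNReal.ofReal ((1 + ‖ξ‖ ^ 2) ^ s) * ‖F ξ‖ₑ ^ 2 ∂μ) *
        ∫⁻ ξ, ENNReal.ofReal ((1 + ‖ξ‖ ^ 2) ^ r) * ‖G ξ‖ₑ ^ 2 ∂μ := by
  have hΦ : AEMeasurable (fun z => bracketPow s z * ‖F z‖ₑ) μ :=
    (measurable_bracketPow s).aemeasurable.mul hF.enorm
  have hΨ : AEMeasurable (fun z => bracketPow r z * ‖G z‖ₑ) μ :=
    (measurable_bracketPow r).aemeasurable.mul hG.enorm
  calc _ ≤ ∫⁻ ξ, ENNReal.ofReal (2 ^ r) ^ 2 * (∫⁻ z, bracketPow s z * ‖F z‖ₑ *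
          (bracketPow r (ξ - z) * ‖G (ξ - z)‖ₑ) *
            (bracketPow (-s) z + bracketPow (-s) (ξ - z)) ∂μ) ^ 2 ∂μ :=
        lintegral_mono fun ξ => ofReal_rpow_mul_enorm_integral_mul_sub_sq_le hr hrs F G ξ
    _ ≤ ENNReal.ofReal (2 ^ r) ^ 2 * (4 * (∫⁻ z, bracketPow (-s) z ^ 2 ∂μ) *
          (∫⁻ z, (bracketPow s z * ‖F z‖ₑ) ^ 2 ∂μ) *
            ∫⁻ z, (bracketPow r z * ‖G z‖ₑ) ^ 2 ∂μ) := by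
        rw [lintegral_const_mul' _ _ (by simp)]
        gcongr
        exact lintegral_sq_lintegral_mul_sub_mul_add_le
          (measurable_bracketPow (-s)).aemeasurable hΦ hΨ
    _ = _ := by simp only [mul_pow, bracketPow_sq, mul_assoc]

end FourierSide

theorem ENNReal.exists_pos_le_ofReal_sq {a : ℝ≥0∞} (ha : a ≠ ∞) :
    ∃ c : ℝ, 0 < c ∧ a ≤ ENNReal.ofReal (c ^ 2) := by
  refine ⟨√(a.toReal + 1), by positivity, ?_⟩
  rw [Real.sq_sqrt (by positivity), ← ENNReal.ofReal_toReal ha]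
  exact ENNReal.ofReal_le_ofReal (by simp)

theorem stmt_15_general (d : ℕ) (s r : ℝ) (hs : (d : ℝ) / 2 < s)
    (hr0 : 0 ≤ r) (hrs : r ≤ s) :
    ∃ c : ℝ, 0 < c ∧
      ∀ F G : EuclideanSpace ℝ (Fin d) → ℂ, AEMeasurable F → AEMeasurable G →
        (∫⁻ ξ, ENNReal.ofReal ((1 + ‖ξ‖ ^ 2) ^ r) *
            (‖∫ z, F z * G (ξ - z)‖₊ : ℝ≥0∞) ^ 2)
          ≤ ENNReal.ofReal (c ^ 2) *
              (∫⁻ ξ, ENNReal.ofReal ((1 + ‖ξ‖ ^ 2) ^ s) * (‖F ξ‖₊ : ℝ≥0∞) ^ 2) *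
              (∫⁻ ξ, ENNReal.ofReal ((1 + ‖ξ‖ ^ 2) ^ r) * (‖G ξ‖₊ : ℝ≥0∞) ^ 2) := by
  have hU : ∫⁻ z : EuclideanSpace ℝ (Fin d), bracketPow (-s) z ^ 2 ≠ ∞ :=
    (lintegral_bracketPow_neg_sq_lt_top volume (by simpa using hs)).ne
  obtain ⟨c, hc, hconst⟩ := ENNReal.exists_pos_le_ofReal_sq
    (by finiteness : ENNReal.ofReal (2 ^ r) ^ 2 * 4 * ∫⁻ z, bracketPow (-s) z ^ 2 ≠ ∞)
  refine ⟨c, hc, fun F G hF hG => ?_⟩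
  calc _ ≤ _ := lintegral_ofReal_rpow_mul_enorm_integral_mul_sub_sq_le hr0 hrs hF hG
    _ ≤ _ := by gcongr ?_ * _ * _

/-- Fourier-side formulation; `F = f̂`, `G = ĝ`, and the Fourier
transform of the pointwise product `fg` is the convolution `F ∗ G`;
`‖f‖²_{H^t} = ∫ (1+|ξ|²)^t |f̂|²`.  For `s > d/2` and `0 ≤ r ≤ s` there is
`c = c(r,s,d) > 0` with `‖fg‖_{H^r} ≤ c ‖f‖_{H^s} ‖g‖_{H^r}` for all `f ∈ H^s(ℝ^d)` and
`g ∈ H^r(ℝ^d)` (stated with squared norms). -/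
theorem stmt_15 (d : ℕ) (hd : 0 < d) (s r : ℝ) (hs : (d : ℝ) / 2 < s)
    (hr0 : 0 ≤ r) (hrs : r ≤ s) :
    ∃ c : ℝ, 0 < c ∧
      ∀ F G : EuclideanSpace ℝ (Fin d) → ℂ, AEMeasurable F → AEMeasurable G →
        (∫⁻ ξ, ENNReal.ofReal ((1 + ‖ξ‖ ^ 2) ^ r) *
            (‖∫ z, F z * G (ξ - z)‖₊ : ℝ≥0∞) ^ 2)
          ≤ ENNReal.ofReal (c ^ 2) *
              (∫⁻ ξ, ENNReal.ofReal ((1 + ‖ξ‖ ^ 2) ^ s) * (‖F ξ‖₊ : ℝ≥0∞) ^ 2) *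
              (∫⁻ ξ, ENNReal.ofReal ((1 + ‖ξ‖ ^ 2) ^ r) * (‖G ξ‖₊ : ℝ≥0∞) ^ 2) :=
  stmt_15_general d s r hs hr0 hrs
end
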